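/- Let N, Q ∈ ℝ^{n×n} with N positive semidefinite and Q positive definite, and let P_N be the orthogonal projection onto ker N. Then every positive definite Σ satisfying P_N Σ P_N = P_N Q P_N can be written as Σ = (I + N Y) Q (I + Y N) for some symmetric Y ∈ ℝ^{n×n} with I + N^{1/2} Y N^{1/2} ≻ 0. -/

import Mathlib

/-!
Write matrices in blocks along `range N ⊕ ker N`. Blocks are encoded throughout by the projection
`P` onto `ker N`: a matrix living on one block is padded by `P` (or by zeros) on the other.

A matrix `Z` with `P Z = P` is block upper triangular with unit `ker N`-block, and if its other
diagonal block `G` is positive definite, a Hermitian `Y` with `1 + N Y = (N + P) Z` exists and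
`1 + N^{1/2} Y N^{1/2}` is congruent to `G ⊕ 1`. So it suffices to factor
`(N + P)⁻¹ S (N + P)⁻¹ = Z Q Zᴴ` with such a `Z`. The block-LDU factorisations of both sides
share their `ker N`-block (this is `P S P = P Q P`), and comparing them reduces the problem to the
Riccati equation `G A G = B` between the Schur complements `A` and `B` of the two sides, whose
positive solution is `G = w⁻¹ (w B w)^{1/2} w⁻¹` with `w = A^{1/2}`.
-/

open Matrix

/-- `P` is the orthogonal projection onto the kernel of `N`: it is symmetric, idempotent,
and its fixed points are exactly the kernel of `N`. -/
def IsOrthProjKer {n : ℕ} (N P : Matrix (Fin n) (Fin n) ℝ) : Prop :=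
  Pᵀ = P ∧ P * P = P ∧ ∀ x : Fin n → ℝ, P.mulVec x = x ↔ N.mulVec x = 0

open scoped MatrixOrder ComplexOrder

namespace Matrix

variable {𝕜 m : Type*} [RCLike 𝕜] [Fintype m]

lemma PosDef.conjTranspose_mul_mul_add {X Y : Matrix m m 𝕜} (hX : X.PosDef) (hY : Y.PosDef)
    {A B : Matrix m m 𝕜} (hAB : ∀ x, A *ᵥ x = 0 → B *ᵥ x = 0 → x = 0) :
    (Aᴴ * X * A + Bᴴ * Y * B).PosDef := by
  refine .of_dotProduct_mulVec_pos ((isHermitian_conjTranspose_mul_mul A hX.1).add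
    (isHermitian_conjTranspose_mul_mul B hY.1)) fun x hx => ?_
  have quad (C Z : Matrix m m 𝕜) :
      star x ⬝ᵥ (Cᴴ * Z * C) *ᵥ x = star (C *ᵥ x) ⬝ᵥ Z *ᵥ (C *ᵥ x) := by
    simp only [star_mulVec, dotProduct_mulVec, vecMul_vecMul]
  rw [add_mulVec, dotProduct_add, quad, quad]
  by_cases hA : A *ᵥ x = 0
  · rw [hA, mulVec_zero, dotProduct_zero, zero_add]
    exact hY.dotProduct_mulVec_pos fun hB => hx (hAB x hA hB)
  · exact add_pos_of_pos_of_nonneg (hX.dotProduct_mulVec_pos hA)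
      (hY.posSemidef.dotProduct_mulVec_nonneg _)

lemma IsHermitian.mul_eq_zero_of_mul_self_mul_eq_zero {R B : Matrix m m 𝕜} (hR : R.IsHermitian)
    (h : R * R * B = 0) : R * B = 0 := by
  rw [← conjTranspose_mul_self_eq_zero, conjTranspose_mul, hR.eq, mul_assoc, ← mul_assoc R, h,
    mul_zero]

/-- In blocks along `P`, `p` is the inverse of the `P`-block of `S`, padded by zeros. -/
structure IsCompressionInverse (P S p : Matrix m m 𝕜) : Prop where
  conjTranspose_eq : pᴴ = p
  proj_mul : P * p = p
  mul_compression : p * (P * S * P) = P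

namespace IsCompressionInverse

variable {P S Q p : Matrix m m 𝕜}

lemma of_compression_eq (hp : IsCompressionInverse P S p) (h : P * S * P = P * Q * P) :
    IsCompressionInverse P Q p :=
  ⟨hp.conjTranspose_eq, hp.proj_mul, h ▸ hp.mul_compression⟩

variable (hP : IsStarProjection P) (hp : IsCompressionInverse P S p)
include hP hp

lemma mul_proj : p * P = p := by
  simpa only [conjTranspose_mul, hp.conjTranspose_eq, hP.isSelfAdjoint.isHermitian.eq] using
    congr_arg conjTranspose hp.proj_mul

lemma mul_mul_proj : p * S * P = P := by
  conv_lhs => rw [← hp.mul_proj hP]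
  simpa only [mul_assoc] using hp.mul_compression

lemma proj_mul_mul (hS : S.IsHermitian) : P * S * p = P := by
  simpa only [conjTranspose_mul, hp.conjTranspose_eq, hP.isSelfAdjoint.isHermitian.eq, hS.eq,
    mul_assoc] using congr_arg conjTranspose (hp.mul_mul_proj hP)

lemma mul_mul_self : p * S * p = p := by
  calc p * S * p = p * S * P * p := by rw [mul_assoc _ P, hp.proj_mul]
    _ = p := by rw [hp.mul_mul_proj hP, hp.proj_mul]

/-- `S - S p S` is the Schur complement of the `P`-block of `S`; adding `P` makes it
invertible. -/
lemma posDef_sub_mul_mul_add [DecidableEq m] (hS : S.PosDef) : (S - S * p * S + P).PosDef := by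
  have hpS : (1 - p * S)ᴴ = 1 - S * p := by
    rw [conjTranspose_sub, conjTranspose_one, conjTranspose_mul, hp.conjTranspose_eq,
      hS.isHermitian.eq]
  have hform : S - S * p * S + P = (1 - p * S)ᴴ * S * (1 - p * S) + Pᴴ * 1 * P := by
    rw [hpS, hP.isSelfAdjoint.isHermitian.eq, mul_one, hP.isIdempotentElem.eq]
    calc S - S * p * S + P = S - S * p * S - S * p * S + S * (p * S * p) * S + P := by
          rw [hp.mul_mul_self hP]; noncomm_ring
      _ = (1 - S * p) * S * (1 - p * S) + P := by noncomm_ring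
  rw [hform]
  refine hS.conjTranspose_mul_mul_add .one fun x h1 h2 => ?_
  rw [sub_mulVec, one_mulVec, sub_eq_zero] at h1
  calc x = (p * S) *ᵥ x := h1
    _ = P *ᵥ ((p * S) *ᵥ x) := by rw [mulVec_mulVec, ← mul_assoc, hp.proj_mul]
    _ = 0 := by rw [← h1, h2]

lemma sub_mul_mul_add_mul_proj : (S - S * p * S + P) * P = P := by
  calc (S - S * p * S + P) * P = S * P - S * (p * S * P) + P * P := by noncomm_ring
    _ = P := by rw [hp.mul_mul_proj hP, hP.isIdempotentElem.eq]; abel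

end IsCompressionInverse

variable [DecidableEq m]

lemma exists_isCompressionInverse {P S : Matrix m m 𝕜} (hP : IsStarProjection P)
    (hS : S.PosDef) : ∃ p, IsCompressionInverse P S p := by
  have hPh := hP.isSelfAdjoint.isHermitian.eq
  have hPP := hP.isIdempotentElem.eq
  set T := P * S * P + (1 - P)
  have hT : T.PosDef := by
    have hform : T = Pᴴ * S * P + (1 - P)ᴴ * 1 * (1 - P) := by
      rw [hPh, mul_one, hP.one_sub.isSelfAdjoint.isHermitian.eq, hP.one_sub.isIdempotentElem.eq]
    rw [hform]
    exact hS.conjTranspose_mul_mul_add .one fun x h1 h2 => by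
      rwa [sub_mulVec, one_mulVec, h1, sub_zero] at h2
  have hu : IsUnit T.det := hT.det_pos.ne'.isUnit
  have hPT : P * T = P * S * P := by
    rw [mul_add, hP.mul_one_sub_self, add_zero, ← mul_assoc, ← mul_assoc, hPP]
  have hTP : T * P = P * S * P := by
    rw [add_mul, hP.one_sub_mul_self, add_zero, mul_assoc _ P, hPP]
  have hcomm : T⁻¹ * P = P * T⁻¹ := by
    calc T⁻¹ * P = T⁻¹ * (P * T) * T⁻¹ := by
          rw [← mul_assoc, mul_assoc _ T, mul_nonsing_inv T hu, mul_one]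
      _ = T⁻¹ * (T * P) * T⁻¹ := by rw [hPT, hTP]
      _ = P * T⁻¹ := by rw [← mul_assoc, nonsing_inv_mul T hu, one_mul]
  refine ⟨T⁻¹ * P, ?_, ?_, ?_⟩
  · rw [conjTranspose_mul, conjTranspose_nonsing_inv, hPh, hT.isHermitian.eq, hcomm]
  · rw [← mul_assoc, ← hcomm, mul_assoc, hPP]
  · rw [← hPT, ← mul_assoc, mul_assoc _ P P, hPP, hcomm, mul_assoc, nonsing_inv_mul T hu,
      mul_one]

lemma PosSemidef.cfcSqrt_mul_of_mul_eq {A B : Matrix m m 𝕜} (hA : A.PosSemidef) (h : A * B = B) :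
    CFC.sqrt A * B = B := by
  have hunit : IsUnit (CFC.sqrt A + 1) :=
    (PosDef.posSemidef_add (CFC.sqrt_nonneg A).posSemidef .one).isUnit
  have : (CFC.sqrt A + 1) * (CFC.sqrt A * B - B) = 0 := by
    rw [mul_sub, ← mul_assoc, add_mul, CFC.sqrt_mul_sqrt_self A hA.nonneg, add_mul, h]
    noncomm_ring
  exact sub_eq_zero.1 (hunit.mul_right_eq_zero.1 this)

lemma PosSemidef.cfcSqrt_eq {A : Matrix m m 𝕜} (hA : A.PosSemidef) :
    CFC.sqrt A = hA.1.eigenvectorUnitary.1 *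
      diagonal ((RCLike.ofReal : ℝ → 𝕜) ∘ Real.sqrt ∘ hA.1.eigenvalues) *
      (star hA.1.eigenvectorUnitary : Matrix m m 𝕜) := by
  rw [CFC.sqrt_eq_real_sqrt A hA.nonneg, cfcₙ_eq_cfc, hA.1.cfc_eq, IsHermitian.cfc,
    Unitary.conjStarAlgAut_apply]

lemma PosDef.exists_mul_mul_eq_of_mul_eq {W S P : Matrix m m 𝕜} (hW : W.PosDef) (hS : S.PosDef)
    (hWP : W * P = P) (hSP : S * P = P) :
    ∃ G : Matrix m m 𝕜, G.PosDef ∧ G * W * G = S ∧ G * P = P := by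
  set w := CFC.sqrt W
  have hw : w.PosDef := (IsStrictlyPositive.sqrt W hW.isStrictlyPositive).posDef
  have hww : w * w = W := CFC.sqrt_mul_sqrt_self W hW.posSemidef.nonneg
  have hwu : IsUnit w.det := hw.det_pos.ne'.isUnit
  have hwP : w * P = P := hW.posSemidef.cfcSqrt_mul_of_mul_eq hWP
  have hwiP : w⁻¹ * P = P := by
    conv_lhs => rw [← hwP, nonsing_inv_mul_cancel_left w P hwu]
  have hC : (w * S * w).PosDef := by
    simpa only [hw.isHermitian.eq] using
      hS.conjTranspose_mul_mul_same (mulVec_injective_iff_isUnit.2 hw.isUnit)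
  set k := CFC.sqrt (w * S * w)
  have hk : k.PosDef := (IsStrictlyPositive.sqrt _ hC.isStrictlyPositive).posDef
  have hkk : k * k = w * S * w := CFC.sqrt_mul_sqrt_self _ hC.posSemidef.nonneg
  have hkP : k * P = P := hC.posSemidef.cfcSqrt_mul_of_mul_eq <| by
    rw [mul_assoc, hwP, mul_assoc, hSP, hwP]
  refine ⟨w⁻¹ * k * w⁻¹, ?_, ?_, ?_⟩
  · have := hk.conjTranspose_mul_mul_same (mulVec_injective_iff_isUnit.2
      ((isUnit_iff_isUnit_det _).2 (isUnit_nonsing_inv_det w hwu)))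
    rwa [conjTranspose_nonsing_inv, hw.isHermitian.eq] at this
  · calc w⁻¹ * k * w⁻¹ * W * (w⁻¹ * k * w⁻¹)
        = w⁻¹ * k * (w⁻¹ * w) * (w * w⁻¹) * k * w⁻¹ := by rw [← hww]; noncomm_ring
      _ = w⁻¹ * (k * k) * w⁻¹ := by
        rw [nonsing_inv_mul w hwu, mul_nonsing_inv w hwu]; noncomm_ring
      _ = (w⁻¹ * w) * S * (w * w⁻¹) := by rw [hkk]; noncomm_ring
      _ = S := by rw [nonsing_inv_mul w hwu, mul_nonsing_inv w hwu, one_mul, mul_one]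
  · rw [mul_assoc, hwiP, mul_assoc, hkP, hwiP]

theorem exists_mul_mul_conjTranspose_eq {P Q S : Matrix m m 𝕜} (hP : IsStarProjection P)
    (hQ : Q.PosDef) (hS : S.PosDef) (hPS : P * S * P = P * Q * P) :
    ∃ Z, P * Z = P ∧ (Z * (1 - P) + P).PosDef ∧ Z * Q * Zᴴ = S := by
  obtain ⟨p, hp⟩ := exists_isCompressionInverse hP hS
  have hq := hp.of_compression_eq hPS
  obtain ⟨G, hG, hGQG, hGP⟩ := (hq.posDef_sub_mul_mul_add hP hQ).exists_mul_mul_eq_of_mul_eq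
    (hp.posDef_sub_mul_mul_add hP hS) (hq.sub_mul_mul_add_mul_proj hP)
    (hp.sub_mul_mul_add_mul_proj hP)
  have hPG : P * G = P := by
    simpa only [conjTranspose_mul, hG.isHermitian.eq, hP.isSelfAdjoint.isHermitian.eq] using
      congr_arg conjTranspose hGP
  -- in blocks, `Z = [[G, S₁₂ S₂₂⁻¹ - G Q₁₂ Q₂₂⁻¹], [0, 1]]`
  refine ⟨G * (1 - Q * p) + S * p, ?_, ?_, ?_⟩
  · calc P * (G * (1 - Q * p) + S * p) = P * G - P * G * Q * p + P * S * p := by noncomm_ring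
      _ = P := by
        rw [hPG, hq.proj_mul_mul hP hQ.isHermitian, hp.proj_mul_mul hP hS.isHermitian]; abel
  · convert hG using 1
    calc (G * (1 - Q * p) + S * p) * (1 - P) + P
        = G - G * P + P - (G * Q - S) * (p - p * P) := by noncomm_ring
      _ = G := by rw [hGP, hp.mul_proj hP, sub_self, mul_zero]; abel
  · have hZh : (G * (1 - Q * p) + S * p)ᴴ = (1 - p * Q) * G + p * S := by
      simp only [conjTranspose_add, conjTranspose_mul, conjTranspose_sub, conjTranspose_one,
        hG.isHermitian.eq, hQ.isHermitian.eq, hS.isHermitian.eq, hp.conjTranspose_eq]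
    rw [hZh]
    calc (G * (1 - Q * p) + S * p) * Q * ((1 - p * Q) * G + p * S)
        = G * (Q - Q * p * Q + P) * G - G * P * G + S * p * S
          + G * Q * (p * Q * p - p) * Q * G + G * Q * (p - p * Q * p) * S
          + S * (p - p * Q * p) * Q * G + S * (p * Q * p - p) * S := by noncomm_ring
      _ = S := by
        rw [hq.mul_mul_self hP, hGQG, hGP, hPG, sub_self]
        noncomm_ring

section KernelProjection

variable {N P R : Matrix m m 𝕜} (hP : IsStarProjection P) (hNP : N * P = 0)
  (hker : ∀ x, N *ᵥ x = 0 → P *ᵥ x = x) (hR : R.IsHermitian) (hRR : R * R = N)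
include hP hR hRR

include hker in
lemma posDef_add_proj : (N + P).PosDef := by
  have hform : N + P = Rᴴ * 1 * R + Pᴴ * 1 * P := by
    rw [hR.eq, hP.isSelfAdjoint.isHermitian.eq, mul_one, mul_one, hRR, hP.isIdempotentElem.eq]
  rw [hform]
  refine PosDef.one.conjTranspose_mul_mul_add .one fun x hRx hPx => ?_
  rw [← hker x (by rw [← hRR, ← mulVec_mulVec, hRx, mulVec_zero]), hPx]

omit [DecidableEq m] hP in
include hNP in
lemma sqrt_mul_proj_eq_zero : R * P = 0 :=
  hR.mul_eq_zero_of_mul_self_mul_eq_zero (by rw [hRR, hNP])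

omit [DecidableEq m] in
include hNP in
lemma proj_mul_sqrt_eq_zero : P * R = 0 := by
  simpa only [conjTranspose_mul, hP.isSelfAdjoint.isHermitian.eq, conjTranspose_zero, hR.eq]
    using congr_arg conjTranspose (sqrt_mul_proj_eq_zero hNP hR hRR)

include hNP hker

lemma proj_mul_inv_add_proj : P * (N + P)⁻¹ = P := by
  have hPN : P * N = 0 := by
    rw [← hRR, ← mul_assoc, proj_mul_sqrt_eq_zero hP hNP hR hRR, zero_mul]
  have hu := (posDef_add_proj hP hker hR hRR).det_pos.ne'.isUnit
  calc P * (N + P)⁻¹ = P * (N + P) * (N + P)⁻¹ := by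
        rw [mul_add, hPN, zero_add, hP.isIdempotentElem.eq]
    _ = P := by rw [mul_assoc, mul_nonsing_inv _ hu, mul_one]

lemma mul_inv_add_proj : N * (N + P)⁻¹ = 1 - P := by
  have hu := (posDef_add_proj hP hker hR hRR).det_pos.ne'.isUnit
  calc N * (N + P)⁻¹ = (N + P) * (N + P)⁻¹ - P * (N + P)⁻¹ := by
        rw [add_mul, add_sub_cancel_right]
    _ = 1 - P := by rw [mul_nonsing_inv _ hu, proj_mul_inv_add_proj hP hNP hker hR hRR]

lemma sqrt_mul_inv_add_proj_mul_sqrt : R * (N + P)⁻¹ * R = 1 - P := by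
  have hu := (posDef_add_proj hP hker hR hRR).det_pos.ne'.isUnit
  have hcomm : R * (N + P) = (N + P) * R := by
    rw [mul_add, add_mul, sqrt_mul_proj_eq_zero hNP hR hRR,
      proj_mul_sqrt_eq_zero hP hNP hR hRR, ← hRR, mul_assoc]
  have hRM : R * (N + P)⁻¹ = (N + P)⁻¹ * R := by
    calc R * (N + P)⁻¹ = (N + P)⁻¹ * (N + P) * R * (N + P)⁻¹ := by
          rw [nonsing_inv_mul _ hu, one_mul]
      _ = (N + P)⁻¹ * (R * (N + P)) * (N + P)⁻¹ := by rw [hcomm]; noncomm_ring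
      _ = (N + P)⁻¹ * R := by rw [mul_assoc, mul_assoc, mul_nonsing_inv _ hu, mul_one]
  rw [mul_assoc, ← hRM, ← mul_assoc, hRR, mul_inv_add_proj hP hNP hker hR hRR]

lemma exists_one_add_mul_eq_add_mul {Z : Matrix m m 𝕜} (hPZ : P * Z = P)
    (hZ : (Z * (1 - P) + P).PosDef) :
    ∃ Y : Matrix m m 𝕜, Y.IsHermitian ∧ (1 + R * Y * R).PosDef ∧ 1 + N * Y = (N + P) * Z := by
  have hPh := hP.isSelfAdjoint.isHermitian.eq
  have hRP := sqrt_mul_proj_eq_zero hNP hR hRR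
  have hPR := proj_mul_sqrt_eq_zero hP hNP hR hRR
  have hZh : Zᴴ = Z - Z * P + P * Zᴴ := by
    have hG := hZ.isHermitian.eq
    rw [conjTranspose_add, conjTranspose_mul, conjTranspose_sub, conjTranspose_one, hPh] at hG
    calc Zᴴ = (1 - P) * Zᴴ + P + P * Zᴴ - P := by noncomm_ring
      _ = Z - Z * P + P * Zᴴ := by rw [hG]; noncomm_ring
  set M := (N + P)⁻¹
  -- in blocks, `Y = [[G - N₁⁻¹, Z₁₂], [Z₁₂ᴴ, 0]]`
  refine ⟨Z + Zᴴ - (Z * (1 - P) + P) - M, ?_, ?_, ?_⟩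
  · rw [IsHermitian, conjTranspose_sub, conjTranspose_sub, conjTranspose_add,
      conjTranspose_conjTranspose, hZ.isHermitian.eq,
      (posDef_add_proj hP hker hR hRR).inv.isHermitian.eq]
    abel
  · convert PosDef.one.conjTranspose_mul_mul_add hZ (A := P) (B := R) fun x hPx hRx => ?_ using 1
    · calc 1 + R * (Z + Zᴴ - (Z * (1 - P) + P) - M) * R
          = Pᴴ * 1 * P + Rᴴ * (Z * (1 - P) + P) * R + (1 - P - R * M * R) + (P - P * P)
            + R * P * (Zᴴ * R - R - R) + R * Z * (P * R) := by
            conv_lhs => rw [hZh]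
            rw [hPh, hR.eq]
            noncomm_ring
        _ = Pᴴ * 1 * P + Rᴴ * (Z * (1 - P) + P) * R := by
            rw [sqrt_mul_inv_add_proj_mul_sqrt hP hNP hker hR hRR, hP.isIdempotentElem.eq, hRP,
              hPR]
            simp only [sub_self, zero_mul, mul_zero, add_zero]
    · rw [← hker x (by rw [← hRR, ← mulVec_mulVec, hRx, mulVec_zero]), hPx]
  · calc 1 + N * (Z + Zᴴ - (Z * (1 - P) + P) - M)
        = N * Z + P + N * P * (Zᴴ - 1) + (1 - P - N * M) := by
          conv_lhs => rw [hZh]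
          noncomm_ring
      _ = (N + P) * Z := by
          rw [hNP, mul_inv_add_proj hP hNP hker hR hRR, add_mul, hPZ]
          simp only [sub_self, zero_mul, add_zero]

end KernelProjection

theorem exists_isHermitian_eq_one_add_mul_mul_one_add_mul {N P Q S : Matrix m m 𝕜}
    (hN : N.PosSemidef) (hP : IsStarProjection P) (hNP : N * P = 0)
    (hker : ∀ x, N *ᵥ x = 0 → P *ᵥ x = x) (hQ : Q.PosDef) (hS : S.PosDef)
    (hPS : P * S * P = P * Q * P) :
    ∃ Y : Matrix m m 𝕜, Y.IsHermitian ∧ (1 + CFC.sqrt N * Y * CFC.sqrt N).PosDef ∧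
      S = (1 + N * Y) * Q * (1 + Y * N) := by
  have hR : (CFC.sqrt N).IsHermitian := (CFC.sqrt_nonneg N).posSemidef.isHermitian
  have hRR : CFC.sqrt N * CFC.sqrt N = N := CFC.sqrt_mul_sqrt_self N hN.nonneg
  have hNP' := posDef_add_proj hP hker hR hRR
  have hu := hNP'.det_pos.ne'.isUnit
  have hPM := proj_mul_inv_add_proj hP hNP hker hR hRR
  have hMP : (N + P)⁻¹ * P = P := by
    simpa only [conjTranspose_mul, hNP'.inv.isHermitian.eq, hP.isSelfAdjoint.isHermitian.eq] using
      congr_arg conjTranspose hPM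
  have hMSM : ((N + P)⁻¹ * S * (N + P)⁻¹).PosDef := by
    simpa only [hNP'.inv.isHermitian.eq] using hS.conjTranspose_mul_mul_same
      (mulVec_injective_iff_isUnit.2 hNP'.inv.isUnit)
  obtain ⟨Z, hPZ, hZ, hZS⟩ := exists_mul_mul_conjTranspose_eq hP hQ hMSM <| by
    rw [← hPS, ← mul_assoc, ← mul_assoc, hPM, mul_assoc _ _ P, hMP]
  obtain ⟨Y, hY, hYpos, hNY⟩ := exists_one_add_mul_eq_add_mul hP hNP hker hR hRR hPZ hZ
  have hYN : 1 + Y * N = Zᴴ * (N + P) := by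
    simpa only [conjTranspose_add, conjTranspose_one, conjTranspose_mul, hY.eq, hN.isHermitian.eq,
      hP.isSelfAdjoint.isHermitian.eq] using congr_arg conjTranspose hNY
  refine ⟨Y, hY, hYpos, ?_⟩
  calc S = (N + P) * (N + P)⁻¹ * S * ((N + P)⁻¹ * (N + P)) := by
        rw [mul_nonsing_inv _ hu, nonsing_inv_mul _ hu, one_mul, mul_one]
    _ = (N + P) * (Z * Q * Zᴴ) * (N + P) := by rw [hZS]; noncomm_ring
    _ = (1 + N * Y) * Q * (1 + Y * N) := by rw [hNY, hYN]; noncomm_ring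

end Matrix

namespace IsOrthProjKer

variable {n : ℕ} {N P : Matrix (Fin n) (Fin n) ℝ}

lemma isStarProjection (hP : IsOrthProjKer N P) : IsStarProjection P :=
  ⟨hP.2.1, IsHermitian.isSelfAdjoint (by rw [IsHermitian, conjTranspose_eq_transpose_of_trivial,
    hP.1])⟩

lemma mul_proj_eq_zero (hP : IsOrthProjKer N P) : N * P = 0 :=
  ext_iff_mulVec.2 fun x => by
    rw [← mulVec_mulVec, zero_mulVec, ← hP.2.2, mulVec_mulVec, hP.2.1]

end IsOrthProjKer

/-- Every positive definite `S` with `P S P = P Q P` can be written as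
`S = (I + N Y) Q (I + Y N)` with `Y` symmetric and `I + N^{1/2} Y N^{1/2} ≻ 0`. -/
theorem stmt7 {n : ℕ} (N Q P : Matrix (Fin n) (Fin n) ℝ)
    (hN : N.PosSemidef) (hQ : Q.PosDef) (hP : IsOrthProjKer N P)
    (S : Matrix (Fin n) (Fin n) ℝ) (hS : S.PosDef)
    (hPS : P * S * P = P * Q * P) :
    ∃ Y : Matrix (Fin n) (Fin n) ℝ, Yᵀ = Y ∧
      (1 + (hN.1.eigenvectorUnitary.1 * diagonal ((RCLike.ofReal : ℝ → ℝ) ∘ Real.sqrt ∘ hN.1.eigenvalues) *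
        (star hN.1.eigenvectorUnitary : Matrix (Fin n) (Fin n) ℝ)) * Y *
        (hN.1.eigenvectorUnitary.1 * diagonal ((RCLike.ofReal : ℝ → ℝ) ∘ Real.sqrt ∘ hN.1.eigenvalues) *
        (star hN.1.eigenvectorUnitary : Matrix (Fin n) (Fin n) ℝ))).PosDef ∧
      S = (1 + N * Y) * Q * (1 + Y * N) := by
  rw [← hN.cfcSqrt_eq]
  obtain ⟨Y, hY, hYpos, hSY⟩ := exists_isHermitian_eq_one_add_mul_mul_one_add_mul hN
    hP.isStarProjection hP.mul_proj_eq_zero (fun x => (hP.2.2 x).2) hQ hS hPS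
  exact ⟨Y, by rwa [IsHermitian, conjTranspose_eq_transpose_of_trivial] at hY, hYpos, hSY⟩
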